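/- arXiv:2306.08890 — 2 statements merged into one kernel-verified Lean document; each statement's English description precedes it below -/
import Mathlib

section
/- Let D ⊊ ℝⁿ be an open set with nonempty boundary ∂D. Then the function ĉ_D(x,y) = sup_{p ∈ ∂D} |x−y| / max(|x−p|, |y−p|) is a metric on D: it is nonnegative, symmetric, vanishes exactly when x = y, and satisfies the triangle inequality ĉ_D(x,y) ≤ ĉ_D(x,z) + ĉ_D(z,y) for all x, y, z ∈ D. -/
open Set Metric

/-- The `ĉ` metric: `ĉ_D(x,y) = sup_{p ∈ ∂D} |x−y| / max(|x−p|, |y−p|)`. -/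
noncomputable def ctilde {E : Type*} [SeminormedAddCommGroup E] (D : Set E) (x y : E) : ℝ :=
  ⨆ p : frontier D, ‖x - y‖ / max ‖x - (p : E)‖ ‖y - (p : E)‖

/-!
For a fixed boundary point `p`, the Ptolemy inequality
`|x - y| |z - p| ≤ |x - z| |y - p| + |z - y| |x - p|` together with the triangle inequality gives
`|x - y| / max(|x - p|, |y - p|) ≤ |x - z| / max(|x - p|, |z - p|) + |z - y| / max(|z - p|, |y - p|)`:
if `|z - p|` does not exceed `max(|x - p|, |y - p|)` the triangle inequality suffices, otherwise
both denominators on the right equal `|z - p|` and Ptolemy applies. Taking suprema over `p` yields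
the triangle inequality for `ĉ_D`. Points of the open set `D` lie off its boundary, which keeps
the denominators positive; a single boundary point then already makes `ĉ_D(x, y) > 0` for `x ≠ y`.
-/

lemma div_max_le_div_max_add_div_max {dxy dxz dzy a b c : ℝ} (hxz : 0 ≤ dxz) (hzy : 0 ≤ dzy)
    (ha : 0 < a) (hc : 0 < c) (htri : dxy ≤ dxz + dzy) (hptol : dxy * c ≤ dxz * b + dzy * a) :
    dxy / max a b ≤ dxz / max a c + dzy / max c b := by
  have hab : 0 < max a b := lt_max_of_lt_left ha
  rcases le_or_gt c (max a b) with hcM | hMc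
  · calc dxy / max a b ≤ (dxz + dzy) / max a b := by gcongr
      _ = dxz / max a b + dzy / max a b := add_div _ _ _
      _ ≤ dxz / max a c + dzy / max c b := add_le_add
          (div_le_div_of_nonneg_left hxz (lt_max_of_lt_left ha) (max_le (le_max_left a b) hcM))
          (div_le_div_of_nonneg_left hzy (lt_max_of_lt_left hc) (max_le hcM (le_max_right a b)))
  · rw [max_eq_right ((le_max_left a b).trans hMc.le),
      max_eq_left ((le_max_right a b).trans hMc.le), ← add_div, div_le_div_iff₀ hab hc]
    calc dxy * c ≤ dxz * b + dzy * a := hptol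
      _ ≤ dxz * max a b + dzy * max a b := by
          gcongr
          exacts [le_max_right a b, le_max_left a b]
      _ = (dxz + dzy) * max a b := (add_mul _ _ _).symm

lemma norm_sub_div_max_le {E : Type*} [NormedAddCommGroup E] [InnerProductSpace ℝ E]
    {x y z p : E} (hx : x ≠ p) (hz : z ≠ p) :
    ‖x - y‖ / max ‖x - p‖ ‖y - p‖ ≤
      ‖x - z‖ / max ‖x - p‖ ‖z - p‖ + ‖z - y‖ / max ‖z - p‖ ‖y - p‖ := by
  have hptol := EuclideanGeometry.mul_dist_le_mul_dist_add_mul_dist x z y p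
  simp only [dist_eq_norm] at hptol
  exact div_max_le_div_max_add_div_max (norm_nonneg _) (norm_nonneg _)
    (norm_pos_iff.2 (sub_ne_zero.2 hx)) (norm_pos_iff.2 (sub_ne_zero.2 hz))
    (norm_sub_le_norm_sub_add_norm_sub x z y) hptol

section Seminormed

variable {E : Type*} [SeminormedAddCommGroup E] (D : Set E) (x y : E)

lemma ctilde_comm : ctilde D x y = ctilde D y x := by
  simp only [ctilde, norm_sub_rev x y, max_comm]

@[simp]
lemma ctilde_self : ctilde D x x = 0 := by
  simp [ctilde]

lemma ctilde_nonneg : 0 ≤ ctilde D x y :=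
  Real.iSup_nonneg fun _ ↦ by positivity

lemma bddAbove_range_ctilde :
    BddAbove (range fun p : frontier D ↦ ‖x - y‖ / max ‖x - (p : E)‖ ‖y - (p : E)‖) := by
  refine ⟨2, forall_mem_range.2 fun p ↦ div_le_of_le_mul₀ (by positivity) zero_le_two ?_⟩
  calc ‖x - y‖ ≤ ‖x - p‖ + ‖y - p‖ := by
        simpa only [dist_eq_norm] using dist_triangle_right x y (p : E)
    _ ≤ max ‖x - (p : E)‖ ‖y - p‖ + max ‖x - (p : E)‖ ‖y - p‖ :=
        add_le_add (le_max_left _ _) (le_max_right _ _)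
    _ = 2 * max ‖x - (p : E)‖ ‖y - (p : E)‖ := (two_mul _).symm

lemma le_ctilde (p : frontier D) : ‖x - y‖ / max ‖x - (p : E)‖ ‖y - (p : E)‖ ≤ ctilde D x y :=
  le_ciSup (bddAbove_range_ctilde D x y) p

end Seminormed

section Normed

variable {E : Type*} [NormedAddCommGroup E] {D : Set E} {x y z : E}

lemma ctilde_pos (hfr : (frontier D).Nonempty) (hx : x ∉ frontier D) (hxy : x ≠ y) :
    0 < ctilde D x y := by
  obtain ⟨p, hp⟩ := hfr
  have hxp : x ≠ p := fun h ↦ hx (h ▸ hp)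
  refine lt_of_lt_of_le ?_ (le_ctilde D x y ⟨p, hp⟩)
  exact div_pos (norm_pos_iff.2 (sub_ne_zero.2 hxy))
    (lt_max_of_lt_left (norm_pos_iff.2 (sub_ne_zero.2 hxp)))

lemma ctilde_eq_zero_iff (hfr : (frontier D).Nonempty) (hx : x ∉ frontier D) :
    ctilde D x y = 0 ↔ x = y := by
  refine ⟨fun h ↦ ?_, fun h ↦ h ▸ ctilde_self D x⟩
  by_contra hxy
  exact (ctilde_pos hfr hx hxy).ne' h

lemma ctilde_le_add [InnerProductSpace ℝ E] (hx : x ∉ frontier D) (hz : z ∉ frontier D) :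
    ctilde D x y ≤ ctilde D x z + ctilde D z y := by
  refine Real.iSup_le (fun p ↦ ?_) (add_nonneg (ctilde_nonneg D x z) (ctilde_nonneg D z y))
  have hxp : x ≠ p := fun h ↦ hx (h ▸ p.2)
  have hzp : z ≠ p := fun h ↦ hz (h ▸ p.2)
  exact (norm_sub_div_max_le hxp hzp).trans (add_le_add (le_ctilde D x z p) (le_ctilde D z y p))

end Normed

theorem ctilde_is_metric_euclidean_general {n : ℕ}
    (D : Set (EuclideanSpace ℝ (Fin n))) (hD : IsOpen D)
    (hfr : (frontier D).Nonempty) :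
    (∀ x ∈ D, ∀ y ∈ D, 0 ≤ ctilde D x y) ∧
    (∀ x ∈ D, ∀ y ∈ D, ctilde D x y = ctilde D y x) ∧
    (∀ x ∈ D, ∀ y ∈ D, (ctilde D x y = 0 ↔ x = y)) ∧
    (∀ x ∈ D, ∀ y ∈ D, ∀ z ∈ D, ctilde D x y ≤ ctilde D x z + ctilde D z y) := by
  have off_frontier : ∀ x ∈ D, x ∉ frontier D := fun x hx hfx ↦
    (hD.frontier_eq ▸ hfx).2 hx
  exact ⟨fun x _ y _ ↦ ctilde_nonneg D x y,
    fun x _ y _ ↦ ctilde_comm D x y,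
    fun x hx _ _ ↦ ctilde_eq_zero_iff hfr (off_frontier x hx),
    fun x hx _ _ z hz ↦ ctilde_le_add (off_frontier x hx) (off_frontier z hz)⟩

/-- For an open proper subset `D ⊊ ℝⁿ` with nonempty boundary, `ĉ_D` is a metric on `D`. -/
theorem ctilde_is_metric_euclidean {n : ℕ} (hn : 1 ≤ n)
    (D : Set (EuclideanSpace ℝ (Fin n))) (hD : IsOpen D) (hDproper : D ≠ Set.univ)
    (hfr : (frontier D).Nonempty) :
    (∀ x ∈ D, ∀ y ∈ D, 0 ≤ ctilde D x y) ∧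
    (∀ x ∈ D, ∀ y ∈ D, ctilde D x y = ctilde D y x) ∧
    (∀ x ∈ D, ∀ y ∈ D, (ctilde D x y = 0 ↔ x = y)) ∧
    (∀ x ∈ D, ∀ y ∈ D, ∀ z ∈ D, ctilde D x y ≤ ctilde D x z + ctilde D z y) :=
  ctilde_is_metric_euclidean_general D hD hfr
end

section
/- Let a ∈ Bⁿ with 0 < |a| < 1, set a* = a/|a|², r² = |a*|² − 1, and σ_a(x) = a* + r²·(x − a*)/|x − a*|². Then for all x, y ∈ Bⁿ with x ≠ y and every p with |p| = 1, |σ_a(x) − σ_a(y)| / max(|σ_a(x) − σ_a(p)|, |σ_a(y) − σ_a(p)|) ≤ ((1+|a|)/(1−|a|)) · |x−y| / max(|x−p|, |y−p|). -/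
open Set Metric

/-- The point `a* = a/|a|²`. -/
noncomputable def aStar {E : Type*} [NormedAddCommGroup E] [NormedSpace ℝ E] (a : E) : E :=
  (‖a‖ ^ 2)⁻¹ • a

/-- The inversion `σ_a(x) = a* + r²·(x − a*)/|x − a*|²` in the sphere of center `a*`
and radius `r`, where `r² = |a*|² − 1`. -/
noncomputable def sigmaInv {E : Type*} [NormedAddCommGroup E] [NormedSpace ℝ E] (a x : E) :
    E :=
  aStar a + ((‖aStar a‖ ^ 2 - 1) / ‖x - aStar a‖ ^ 2) • (x - aStar a)

/-!
The inversion `σ_a` multiplies the distance of `u, v` by `r² / (|u − a*| |v − a*|)`. In the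
ratio most of these factors cancel, leaving
`|p − a*| |x − y| / max (|y − a*| |x − p|, |x − a*| |y − p|)`, and on the closed unit ball
`|a*| − 1 ≤ |z − a*| ≤ |a*| + 1`. Since `|a*| = 1/|a|`, the resulting constant
`(|a*| + 1)/(|a*| − 1)` is `(1 + |a|)/(1 − |a|)`.
-/

theorem weighted_dist_ratio_le {k A B C lo hi dxy dxp dyp : ℝ} (hk : 0 < k) (hlo : 0 < lo)
    (hA : lo ≤ A) (hB : lo ≤ B) (hC : 0 < C) (hChi : C ≤ hi)
    (hdxy : 0 ≤ dxy) (hdxp : 0 < dxp) (hdyp : 0 < dyp) :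
    k / (A * B) * dxy / max (k / (A * C) * dxp) (k / (B * C) * dyp) ≤
      hi / lo * (dxy / max dxp dyp) := by
  have hA0 : 0 < A := hlo.trans_le hA
  have hB0 : 0 < B := hlo.trans_le hB
  have hmax : max (k / (A * C) * dxp) (k / (B * C) * dyp) =
      k / (A * B * C) * max (B * dxp) (A * dyp) := by
    rw [mul_max_of_nonneg _ _ (by positivity)]
    congr 1 <;> field_simp
  have hlow : lo * max dxp dyp ≤ max (B * dxp) (A * dyp) := by
    rw [mul_max_of_nonneg _ _ hlo.le]
    exact max_le_max (by gcongr) (by gcongr)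
  calc k / (A * B) * dxy / max (k / (A * C) * dxp) (k / (B * C) * dyp)
      = C * dxy / max (B * dxp) (A * dyp) := by
        rw [hmax]
        field_simp
    _ ≤ hi * dxy / (lo * max dxp dyp) := by gcongr; exact mul_nonneg (hC.le.trans hChi) hdxy
    _ = hi / lo * (dxy / max dxp dyp) := mul_div_mul_comm _ _ _ _

theorem norm_aStar {E : Type*} [NormedAddCommGroup E] [NormedSpace ℝ E] (a : E) :
    ‖aStar a‖ = ‖a‖⁻¹ := by
  rw [aStar, norm_smul, norm_inv, norm_pow, norm_norm, pow_two, mul_inv, mul_assoc]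
  rcases eq_or_ne ‖a‖ 0 with h | h
  · simp [h]
  · rw [inv_mul_cancel₀ h, mul_one]

section Inversion

variable {E : Type*} [NormedAddCommGroup E] [InnerProductSpace ℝ E]

theorem sigmaInv_eq_inversion (a z : E) (ha : 1 ≤ ‖aStar a‖) :
    sigmaInv a z = EuclideanGeometry.inversion (aStar a) (√(‖aStar a‖ ^ 2 - 1)) z := by
  rw [sigmaInv, EuclideanGeometry.inversion, vsub_eq_sub, vadd_eq_add, dist_eq_norm, div_pow,
    Real.sq_sqrt (by nlinarith), add_comm]

theorem norm_sigmaInv_sub_sigmaInv {a u v : E} (ha : 1 ≤ ‖aStar a‖) (hu : u ≠ aStar a)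
    (hv : v ≠ aStar a) :
    ‖sigmaInv a u - sigmaInv a v‖ =
      (‖aStar a‖ ^ 2 - 1) / (‖u - aStar a‖ * ‖v - aStar a‖) * ‖u - v‖ := by
  rw [← dist_eq_norm, sigmaInv_eq_inversion a u ha, sigmaInv_eq_inversion a v ha,
    EuclideanGeometry.dist_inversion_inversion hu hv, Real.sq_sqrt (by nlinarith),
    dist_eq_norm, dist_eq_norm, dist_eq_norm]

end Inversion

theorem sigmaInv_pointwise_distortion_general {n : ℕ}
    (a x y p : EuclideanSpace ℝ (Fin n)) (ha0 : a ≠ 0) (ha1 : ‖a‖ < 1)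
    (hx : ‖x‖ < 1) (hy : ‖y‖ < 1) (hp : ‖p‖ = 1) :
    ‖sigmaInv a x - sigmaInv a y‖ /
        max ‖sigmaInv a x - sigmaInv a p‖ ‖sigmaInv a y - sigmaInv a p‖ ≤
      (1 + ‖a‖) / (1 - ‖a‖) * (‖x - y‖ / max ‖x - p‖ ‖y - p‖) := by
  set c := aStar a
  have hna : 0 < ‖a‖ := norm_pos_iff.mpr ha0
  have hc : 1 < ‖c‖ := by rw [norm_aStar]; exact (one_lt_inv₀ hna).mpr ha1
  have hlo : ∀ z : EuclideanSpace ℝ (Fin n), ‖z‖ ≤ 1 → ‖c‖ - 1 ≤ ‖z - c‖ := fun z hz => by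
    linarith [norm_sub_norm_le c z, norm_sub_rev c z]
  have hne : ∀ z : EuclideanSpace ℝ (Fin n), ‖z‖ ≤ 1 → z ≠ c := fun z hz =>
    norm_sub_pos_iff.mp ((sub_pos.mpr hc).trans_le (hlo z hz))
  have hK : (1 + ‖a‖) / (1 - ‖a‖) = (‖c‖ + 1) / (‖c‖ - 1) := by
    rw [norm_aStar]
    field_simp
  rw [norm_sigmaInv_sub_sigmaInv hc.le (hne x hx.le) (hne y hy.le),
    norm_sigmaInv_sub_sigmaInv hc.le (hne x hx.le) (hne p hp.le),
    norm_sigmaInv_sub_sigmaInv hc.le (hne y hy.le) (hne p hp.le), hK]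
  exact weighted_dist_ratio_le (by nlinarith) (by linarith) (hlo x hx.le) (hlo y hy.le)
    (norm_sub_pos_iff.mpr (hne p hp.le)) ((norm_sub_le p c).trans (by rw [hp, add_comm]))
    (norm_nonneg _) (by rw [norm_sub_pos_iff]; rintro rfl; linarith)
    (by rw [norm_sub_pos_iff]; rintro rfl; linarith)

/-- Theorem: for `a ∈ Bⁿ \ {0}`, distinct `x, y ∈ Bⁿ` and `p` with `|p| = 1`,
`|σ_a(x) − σ_a(y)| / max(|σ_a(x) − σ_a(p)|, |σ_a(y) − σ_a(p)|)
  ≤ ((1+|a|)/(1−|a|)) · |x−y| / max(|x−p|, |y−p|)`. -/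
theorem sigmaInv_pointwise_distortion {n : ℕ} (hn : 2 ≤ n)
    (a x y p : EuclideanSpace ℝ (Fin n)) (ha0 : a ≠ 0) (ha1 : ‖a‖ < 1)
    (hx : ‖x‖ < 1) (hy : ‖y‖ < 1) (hxy : x ≠ y) (hp : ‖p‖ = 1) :
    ‖sigmaInv a x - sigmaInv a y‖ /
        max ‖sigmaInv a x - sigmaInv a p‖ ‖sigmaInv a y - sigmaInv a p‖ ≤
      (1 + ‖a‖) / (1 - ‖a‖) * (‖x - y‖ / max ‖x - p‖ ‖y - p‖) :=
  sigmaInv_pointwise_distortion_general a x y p ha0 ha1 hx hy hp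
end
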